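/- arXiv:1508.00493 — 2 statements merged into one kernel-verified Lean document; each statement's English description precedes it below -/
import Mathlib

section
/- The map x_0 ↦ x_0x_2, x_1 ↦ x_1x_2 extends to a group isomorphism from Thompson's group F onto its subgroup G = ⟨x_0x_2, x_1x_2⟩; in particular, G is isomorphic to F. -/
set_option maxHeartbeats 1000000

noncomputable section

/-- The unit interval `[0,1]` as a type. -/
abbrev I : Type := Set.Icc (0:ℝ) 1

/-- The underlying function of the generator `x₀` of Thompson's group `F`. -/
def x0fun (t : ℝ) : ℝ := if t ≤ 1/4 then 2*t else if t ≤ 1/2 then t + 1/4 else t/2 + 1/2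

/-- The inverse of `x0fun`. -/
def x0inv (t : ℝ) : ℝ := if t ≤ 1/2 then t/2 else if t ≤ 3/4 then t - 1/4 else 2*t - 1

/-- The underlying function of the generator `x₁` of Thompson's group `F`. -/
def x1fun (t : ℝ) : ℝ :=
  if t ≤ 1/2 then t else if t ≤ 5/8 then 2*t - 1/2 else if t ≤ 3/4 then t + 1/8 else t/2 + 1/2

/-- The inverse of `x1fun`. -/
def x1inv (t : ℝ) : ℝ :=
  if t ≤ 1/2 then t else if t ≤ 3/4 then t/2 + 1/4 else if t ≤ 7/8 then t - 1/8 else 2*t - 1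

/-- The generator `x₀` of Thompson's group `F`, as a bijection of `[0,1]`. -/
def x₀ : Equiv.Perm I where
  toFun t := ⟨x0fun t.1, by
    obtain ⟨h0, h1⟩ := Set.mem_Icc.mp t.2
    simp only [Set.mem_Icc, x0fun]
    split_ifs <;> constructor <;> linarith⟩
  invFun t := ⟨x0inv t.1, by
    obtain ⟨h0, h1⟩ := Set.mem_Icc.mp t.2
    simp only [Set.mem_Icc, x0inv]
    split_ifs <;> constructor <;> linarith⟩
  left_inv t := by
    obtain ⟨h0, h1⟩ := Set.mem_Icc.mp t.2
    apply Subtype.ext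
    show x0inv (x0fun t.1) = t.1
    simp only [x0fun, x0inv]
    split_ifs <;> linarith
  right_inv t := by
    obtain ⟨h0, h1⟩ := Set.mem_Icc.mp t.2
    apply Subtype.ext
    show x0fun (x0inv t.1) = t.1
    simp only [x0fun, x0inv]
    split_ifs <;> linarith

/-- The generator `x₁` of Thompson's group `F`, as a bijection of `[0,1]`. -/
def x₁ : Equiv.Perm I where
  toFun t := ⟨x1fun t.1, by
    obtain ⟨h0, h1⟩ := Set.mem_Icc.mp t.2
    simp only [Set.mem_Icc, x1fun]
    split_ifs <;> constructor <;> linarith⟩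
  invFun t := ⟨x1inv t.1, by
    obtain ⟨h0, h1⟩ := Set.mem_Icc.mp t.2
    simp only [Set.mem_Icc, x1inv]
    split_ifs <;> constructor <;> linarith⟩
  left_inv t := by
    obtain ⟨h0, h1⟩ := Set.mem_Icc.mp t.2
    apply Subtype.ext
    show x1inv (x1fun t.1) = t.1
    simp only [x1fun, x1inv]
    split_ifs <;> linarith
  right_inv t := by
    obtain ⟨h0, h1⟩ := Set.mem_Icc.mp t.2
    apply Subtype.ext
    show x1fun (x1inv t.1) = t.1
    simp only [x1fun, x1inv]
    split_ifs <;> linarith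

/-- Composition in Thompson's group `F` is from left to right: the product `f·g` in the paper
is the function `t ↦ g (f t)`.  In Lean, `Equiv.Perm` multiplication is composition from right
to left: `(f * g) t = f (g t)`.  Hence a paper product `a₁ a₂ ⋯ aₙ` corresponds to the Lean
product `aₙ * ⋯ * a₂ * a₁`.

`x i` is the standard generator `x_i` of Thompson's group `F`: here `x_0, x_1` are the explicit
piecewise-linear maps, and for `i ≥ 1`, `x_{i+1} = x_0^{-i} x_1 x_0^{i}` (left-to-right
composition), which in Lean's convention is `x₀ ^ i * x₁ * (x₀ ^ i)⁻¹`. -/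
def x (i : ℕ) : Equiv.Perm I := if i = 0 then x₀ else x₀ ^ (i-1) * x₁ * (x₀ ^ (i-1))⁻¹

/-- Thompson's group `F`, realized as the group of increasing piecewise-linear homeomorphisms of
`[0,1]` with dyadic breakpoints and slopes powers of 2; it is generated by `x_0` and `x_1`. -/
def F : Subgroup (Equiv.Perm I) := Subgroup.closure {x 0, x 1}

/-- The subgroup `G = ⟨x_0x_2, x_1x_2⟩` of `F` (products written left-to-right, so
`x_0x_2` is the Lean element `x 2 * x 0`). -/
def G : Subgroup (Equiv.Perm I) := Subgroup.closure {x 2 * x 0, x 2 * x 1}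

/-- Jones' subgroup `F⃗ = ⟨x_0x_1, x_1x_2, x_2x_3⟩` of `F` (products written left-to-right). -/
def JonesF : Subgroup (Equiv.Perm I) := Subgroup.closure {x 1 * x 0, x 2 * x 1, x 3 * x 2}

lemma x_mem_F (i : ℕ) : x i ∈ F := by
  have h0 : x 0 ∈ F := Subgroup.subset_closure (by simp)
  have h1 : x 1 ∈ F := Subgroup.subset_closure (by simp)
  have hx0 : x₀ ∈ F := by simpa [x] using h0
  have hx1 : x₁ ∈ F := by simpa [x] using h1
  rcases Nat.eq_zero_or_pos i with h | h
  · subst h; exact h0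
  · have : x i = x₀ ^ (i-1) * x₁ * (x₀ ^ (i-1))⁻¹ := by
      simp [x, Nat.pos_iff_ne_zero.mp h]
    rw [this]
    exact mul_mem (mul_mem (pow_mem hx0 _) hx1) (inv_mem (pow_mem hx0 _))

lemma y0_mem_G : x 2 * x 0 ∈ G := Subgroup.subset_closure (by simp)

lemma y1_mem_G : x 2 * x 1 ∈ G := Subgroup.subset_closure (by simp)

/-- The length `|w|` of an element of `F`: the minimal `n` such that `w` is a product of `n`
elements of `{x_i^{±1} : i ≥ 0}`.  This equals the length of the normal form of `w`. -/
def len (w : Equiv.Perm I) : ℕ :=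
  sInf {n | ∃ l : List (Equiv.Perm I), l.length = n ∧
    (∀ a ∈ l, ∃ i : ℕ, a = x i ∨ a = (x i)⁻¹) ∧ l.prod = w}

/-- The element of `F` given by the positive word `x_{i_1} x_{i_2} ⋯ x_{i_n}` (composition from
left to right), where `l = [i_1, i_2, …, i_n]`.  Since Lean's multiplication of permutations is
composition from right to left, this is the Lean product of the reversed list of letters. -/
def pp (l : List ℕ) : Equiv.Perm I := ((l.map x).reverse).prod

/-- `l = [i_1, …, i_n]` encodes a *block*: a positive normal form `x_{i_1}⋯x_{i_n}`
(so `i_1 ≤ ⋯ ≤ i_n`) with `i_1 ≠ i_n` and `i_j < i_1 + j` for all `j = 1, …, n`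
(here with 0-based indexing: `l[k] < l[0] + k + 1`). -/
def IsBlock (l : List ℕ) : Prop :=
  l ≠ [] ∧ l.Pairwise (· ≤ ·) ∧ l.headI ≠ l.getLastD 0 ∧
    ∀ k < l.length, l.getD k 0 < l.headI + k + 1

/-- The double coset `F⃗ a F⃗` of Jones' subgroup.  (As a set this does not depend on the
composition convention, since `u, v` range over all of `F⃗`.) -/
def dCoset (a : Equiv.Perm I) : Set (Equiv.Perm I) :=
  {w | ∃ u ∈ JonesF, ∃ v ∈ JonesF, w = v * a * u}

/-- A real number is dyadic if it has the form `a / 2^n` with `a, n` natural numbers. -/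
def IsDyadic (α : ℝ) : Prop := ∃ (a : ℕ) (n : ℕ), α = a / 2^n

/-- The subgroup of all permutations fixing every point of `U`. -/
def fixing (U : Set ℝ) : Subgroup (Equiv.Perm I) where
  carrier := {g | ∀ t : I, (t : ℝ) ∈ U → g t = t}
  one_mem' := fun _ _ => rfl
  mul_mem' := by
    intro a b ha hb t ht
    simp only [Equiv.Perm.mul_apply]
    rw [hb t ht, ha t ht]
  inv_mem' := by
    intro a ha t ht
    conv_lhs => rw [← ha t ht]
    exact Equiv.symm_apply_apply a t

/-- `H_U`: the stabilizer in `F` of the finite set `U ⊂ (0,1)`, i.e. the subgroup of all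
elements of `F` fixing every point of `U`. -/
def HU (U : Set ℝ) : Subgroup (Equiv.Perm I) := F ⊓ fixing U


/-!
`G` is conjugate to `F` in the group of bijections of `[0,1]`. Near `1`, in the coordinate
`u = 1 - t`, `x₀` acts as `u ↦ u/2` while `x₀x₂` acts as `u ↦ u/4`. A conjugator `h` with
`h ∘ (x₀x₂) = x₀ ∘ h` that is the identity on `[0, 3/4]` is built on `(3/4, 1)` from a bijection
between the fundamental domains `[1/16, 1/4)` and `[1/8, 1/4)` of these two contractions, extended
equivariantly; the bijection is forced by the relation on `[1/2, 3/4]`. The relation for `x₁`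
then comes for free: `x₁x₂ = (x₁x₀⁻¹)(x₀x₂)`, and `x₁x₀⁻¹` is the identity on `[3/4, 1]`, so it
commutes with `h`.
-/
open Set

namespace Int

variable {R : Type*} [Semifield R] [LinearOrder R] [IsStrictOrderedRing R] [FloorSemiring R]
  {b : ℕ}

theorem log_eq_of_zpow_le_of_lt_zpow_succ (hb : 1 < b) {r : R} {n : ℤ}
    (h₁ : (b : R) ^ n ≤ r) (h₂ : r < (b : R) ^ (n + 1)) : log b r = n := by
  have hr : 0 < r := (zpow_pos (by positivity) n).trans_le h₁
  have := (zpow_le_iff_le_log hb hr).1 h₁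
  have := (lt_zpow_iff_log_lt hb hr).1 h₂
  omega

theorem log_zpow_mul_of_mem_Ico (hb : 1 < b) {w : R} (hw : w ∈ Ico 1 (b : R)) (n : ℤ) :
    log b ((b : R) ^ n * w) = n := by
  have hpos : (0 : R) < (b : R) ^ n := zpow_pos (by positivity) n
  refine log_eq_of_zpow_le_of_lt_zpow_succ hb (le_mul_of_one_le_right hpos.le hw.1) ?_
  rw [zpow_add_one₀ (by positivity)]
  exact mul_lt_mul_of_pos_left hw.2 hpos

theorem div_zpow_log_mem_Ico (hb : 1 < b) {r : R} (hr : 0 < r) :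
    r / (b : R) ^ log b r ∈ Ico 1 (b : R) := by
  have hpos : (0 : R) < (b : R) ^ log b r := zpow_pos (by positivity) _
  have h₂ := lt_zpow_succ_log_self hb r
  rw [zpow_add_one₀ (by positivity)] at h₂
  constructor
  · rw [le_div_iff₀ hpos, one_mul]; exact zpow_log_le_self hb hr
  · rw [div_lt_iff₀ hpos, mul_comm]; exact h₂

end Int

section ScaleExtend

variable {R : Type*} [Field R] [LinearOrder R] [IsStrictOrderedRing R] [FloorSemiring R]
  {a b : ℕ} {φ ψ : R → R}

/-- The extension of `φ : [1, a) → [1, b)` to `(0, ∞)` that intertwines multiplication by `a`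
with multiplication by `b`. -/
def scaleExtend (a b : ℕ) (φ : R → R) (x : R) : R :=
  (b : R) ^ Int.log a x * φ (x / (a : R) ^ Int.log a x)

theorem scaleExtend_zpow_mul_of_mem_Ico (ha : 1 < a) {w : R} (hw : w ∈ Ico 1 (a : R)) (n : ℤ) :
    scaleExtend a b φ ((a : R) ^ n * w) = (b : R) ^ n * φ w := by
  rw [scaleExtend, Int.log_zpow_mul_of_mem_Ico ha hw, mul_div_cancel_left₀ _ (by positivity)]

theorem scaleExtend_of_mem_Ico (ha : 1 < a) {w : R} (hw : w ∈ Ico 1 (a : R)) :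
    scaleExtend a b φ w = φ w := by
  simpa using scaleExtend_zpow_mul_of_mem_Ico (b := b) (φ := φ) ha hw 0

theorem exists_eq_zpow_mul_mem_Ico (ha : 1 < a) {x : R} (hx : 0 < x) :
    ∃ n : ℤ, ∃ w ∈ Ico 1 (a : R), x = (a : R) ^ n * w :=
  ⟨_, _, Int.div_zpow_log_mem_Ico ha hx, (mul_div_cancel₀ _ (by positivity)).symm⟩

theorem scaleExtend_zpow_mul (ha : 1 < a) (hb : 0 < b) {x : R} (hx : 0 < x) (n : ℤ) :
    scaleExtend a b φ ((a : R) ^ n * x) = (b : R) ^ n * scaleExtend a b φ x := by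
  obtain ⟨k, w, hw, rfl⟩ := exists_eq_zpow_mul_mem_Ico ha hx
  rw [← mul_assoc, ← zpow_add₀ (by positivity), scaleExtend_zpow_mul_of_mem_Ico ha hw,
    scaleExtend_zpow_mul_of_mem_Ico ha hw, zpow_add₀ (by positivity), mul_assoc]

theorem scaleExtend_mem_Ioo (ha : 1 < a) (hb : 1 < b) (hφ : MapsTo φ (Ico 1 a) (Ico 1 b))
    {x : R} (hx : x ∈ Ioo 0 (a : R)) : scaleExtend a b φ x ∈ Ioo 0 (b : R) := by
  obtain ⟨n, w, hw, rfl⟩ := exists_eq_zpow_mul_mem_Ico ha hx.1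
  have hn : n < 1 := by
    have : (a : R) ^ n < (a : R) ^ (1 : ℤ) :=
      (le_mul_of_one_le_right (by positivity) hw.1).trans_lt (by simpa using hx.2)
    exact (zpow_lt_zpow_iff_right₀ (by exact_mod_cast ha)).1 this
  obtain ⟨hφ₁, hφ₂⟩ := hφ hw
  rw [scaleExtend_zpow_mul_of_mem_Ico ha hw]
  refine ⟨by positivity, ?_⟩
  calc (b : R) ^ n * φ w < (b : R) ^ n * b := mul_lt_mul_of_pos_left hφ₂ (by positivity)
    _ = (b : R) ^ (n + 1) := (zpow_add_one₀ (by positivity) n).symm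
    _ ≤ (b : R) ^ (0 + 1 : ℤ) := zpow_le_zpow_right₀ (by exact_mod_cast hb.le) (by omega)
    _ = b := by simp

theorem scaleExtend_scaleExtend (ha : 1 < a) (hb : 1 < b) (hφ : MapsTo φ (Ico 1 a) (Ico 1 b))
    (hψφ : ∀ w ∈ Ico 1 (a : R), ψ (φ w) = w) {x : R} (hx : 0 < x) :
    scaleExtend b a ψ (scaleExtend a b φ x) = x := by
  obtain ⟨n, w, hw, rfl⟩ := exists_eq_zpow_mul_mem_Ico ha hx
  rw [scaleExtend_zpow_mul_of_mem_Ico ha hw, scaleExtend_zpow_mul_of_mem_Ico hb (hφ hw),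
    hψφ w hw]

end ScaleExtend

def baseMap (w : ℝ) : ℝ := if w < 2 then (1 + w) / 2 else 1 + w / 4

def baseMapInv (v : ℝ) : ℝ := if v < 3 / 2 then 2 * v - 1 else 4 * (v - 1)

theorem mapsTo_baseMap : MapsTo baseMap (Ico 1 4) (Ico 1 2) := by
  intro w ⟨h₁, h₂⟩
  unfold baseMap
  split_ifs <;> constructor <;> linarith

theorem mapsTo_baseMapInv : MapsTo baseMapInv (Ico 1 2) (Ico 1 4) := by
  intro v ⟨h₁, h₂⟩
  unfold baseMapInv
  split_ifs <;> constructor <;> linarith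

theorem baseMapInv_baseMap (w : ℝ) : baseMapInv (baseMap w) = w := by
  unfold baseMap baseMapInv
  split_ifs <;> linarith

theorem baseMap_baseMapInv (v : ℝ) : baseMap (baseMapInv v) = v := by
  unfold baseMap baseMapInv
  split_ifs <;> linarith

theorem scaleExtend_baseMap_mem_Ioo {x : ℝ} (hx : x ∈ Ioo 0 4) :
    scaleExtend 4 2 baseMap x ∈ Ioo 0 2 := by
  simpa using scaleExtend_mem_Ioo (a := 4) (b := 2) (by norm_num) (by norm_num)
    (by simpa using mapsTo_baseMap) (by simpa using hx)

theorem scaleExtend_baseMapInv_mem_Ioo {y : ℝ} (hy : y ∈ Ioo 0 2) :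
    scaleExtend 2 4 baseMapInv y ∈ Ioo 0 4 := by
  simpa using scaleExtend_mem_Ioo (a := 2) (b := 4) (by norm_num) (by norm_num)
    (by simpa using mapsTo_baseMapInv) (by simpa using hy)

theorem scaleExtend_baseMapInv_baseMap {x : ℝ} (hx : 0 < x) :
    scaleExtend 2 4 baseMapInv (scaleExtend 4 2 baseMap x) = x :=
  scaleExtend_scaleExtend (by norm_num) (by norm_num) (by simpa using mapsTo_baseMap)
    (fun w _ => baseMapInv_baseMap w) hx

theorem scaleExtend_baseMap_baseMapInv {y : ℝ} (hy : 0 < y) :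
    scaleExtend 4 2 baseMap (scaleExtend 2 4 baseMapInv y) = y :=
  scaleExtend_scaleExtend (by norm_num) (by norm_num) (by simpa using mapsTo_baseMapInv)
    (fun v _ => baseMap_baseMapInv v) hy

/-- With `u = 1 - t`, the fundamental domain `[1/16, 1/4)` is rescaled to `[1, 4)` and its image
`[1/8, 1/4)` to `[1, 2)`. -/
def conjugatorFun (t : ℝ) : ℝ :=
  if t ∈ Ioo (3 / 4) 1 then 1 - scaleExtend 4 2 baseMap (16 * (1 - t)) / 8 else t

def conjugatorInvFun (t : ℝ) : ℝ :=
  if t ∈ Ioo (3 / 4) 1 then 1 - scaleExtend 2 4 baseMapInv (8 * (1 - t)) / 16 else t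

theorem conjugatorFun_of_not_mem {t : ℝ} (ht : t ∉ Ioo (3 / 4) 1) : conjugatorFun t = t :=
  if_neg ht

theorem conjugatorFun_of_le {t : ℝ} (ht : t ≤ 3 / 4) : conjugatorFun t = t :=
  conjugatorFun_of_not_mem fun h => by linarith [h.1]

theorem conjugatorFun_mem_Ioo {t : ℝ} (ht : t ∈ Ioo (3 / 4) 1) :
    conjugatorFun t ∈ Ioo (3 / 4) 1 := by
  obtain ⟨h₁, h₂⟩ :=
    scaleExtend_baseMap_mem_Ioo (x := 16 * (1 - t)) ⟨by linarith [ht.2], by linarith [ht.1]⟩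
  rw [conjugatorFun, if_pos ht]
  constructor <;> linarith

theorem conjugatorInvFun_mem_Ioo {t : ℝ} (ht : t ∈ Ioo (3 / 4) 1) :
    conjugatorInvFun t ∈ Ioo (3 / 4) 1 := by
  obtain ⟨h₁, h₂⟩ :=
    scaleExtend_baseMapInv_mem_Ioo (y := 8 * (1 - t)) ⟨by linarith [ht.2], by linarith [ht.1]⟩
  rw [conjugatorInvFun, if_pos ht]
  constructor <;> linarith

theorem conjugatorInvFun_conjugatorFun (t : ℝ) : conjugatorInvFun (conjugatorFun t) = t := by
  by_cases ht : t ∈ Ioo (3 / 4) 1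
  · rw [conjugatorInvFun, if_pos (conjugatorFun_mem_Ioo ht), conjugatorFun, if_pos ht,
      sub_sub_cancel, mul_div_cancel₀ _ (by norm_num),
      scaleExtend_baseMapInv_baseMap (by linarith [ht.2])]
    ring
  · rw [conjugatorFun, if_neg ht, conjugatorInvFun, if_neg ht]

theorem conjugatorFun_conjugatorInvFun (t : ℝ) : conjugatorFun (conjugatorInvFun t) = t := by
  by_cases ht : t ∈ Ioo (3 / 4) 1
  · rw [conjugatorFun, if_pos (conjugatorInvFun_mem_Ioo ht), conjugatorInvFun, if_pos ht,
      sub_sub_cancel, mul_div_cancel₀ _ (by norm_num),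
      scaleExtend_baseMap_baseMapInv (by linarith [ht.2])]
    ring
  · rw [conjugatorInvFun, if_neg ht, conjugatorFun, if_neg ht]

theorem conjugatorFun_mem_Ioc {t : ℝ} (ht : t ∈ Ioc (3 / 4) 1) :
    conjugatorFun t ∈ Ioc (3 / 4) 1 := by
  rcases ht.2.lt_or_eq with h | rfl
  · exact Ioo_subset_Ioc_self (conjugatorFun_mem_Ioo ⟨ht.1, h⟩)
  · rwa [conjugatorFun_of_not_mem (fun h => h.2.false)]

theorem conjugatorFun_eq_half_add {t : ℝ} (h₁ : 3 / 4 < t) (h₂ : t ≤ 7 / 8) :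
    conjugatorFun t = t / 2 + 3 / 8 := by
  rw [conjugatorFun, if_pos ⟨h₁, by linarith⟩,
    scaleExtend_of_mem_Ico (by norm_num) (by norm_num; constructor <;> linarith), baseMap,
    if_neg (by linarith)]
  ring

theorem conjugatorFun_eq_sub {t : ℝ} (h₁ : 7 / 8 < t) (h₂ : t ≤ 15 / 16) :
    conjugatorFun t = t - 1 / 16 := by
  rw [conjugatorFun, if_pos ⟨by linarith, by linarith⟩,
    scaleExtend_of_mem_Ico (by norm_num) (by norm_num; constructor <;> linarith), baseMap,
    if_pos (by linarith)]
  ring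

theorem conjugatorFun_add_three_div_four {t : ℝ} (ht : t ∈ Ioc (3 / 4) 1) :
    conjugatorFun ((t + 3) / 4) = (conjugatorFun t + 1) / 2 := by
  rcases ht.2.lt_or_eq with h | rfl
  · have hx : 16 * (1 - (t + 3) / 4) = ((4 : ℕ) : ℝ) ^ (-1 : ℤ) * (16 * (1 - t)) := by
      norm_num; ring
    rw [conjugatorFun, if_pos ⟨by linarith [ht.1], by linarith⟩, conjugatorFun, if_pos ⟨ht.1, h⟩,
      hx, scaleExtend_zpow_mul (by norm_num) (by norm_num) (by linarith)]
    norm_num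
    ring
  · norm_num [conjugatorFun_of_not_mem (t := 1) (fun h => h.2.false)]

def conjugatorReal : Equiv.Perm ℝ :=
  ⟨conjugatorFun, conjugatorInvFun, conjugatorInvFun_conjugatorFun,
    conjugatorFun_conjugatorInvFun⟩

theorem conjugatorFun_mem_Icc_iff (t : ℝ) : conjugatorFun t ∈ Icc 0 1 ↔ t ∈ Icc 0 1 := by
  by_cases ht : t ∈ Ioo (3 / 4) 1
  · have h := conjugatorFun_mem_Ioo ht
    exact iff_of_true ⟨by linarith [h.1], h.2.le⟩ ⟨by linarith [ht.1], ht.2.le⟩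
  · rw [conjugatorFun_of_not_mem ht]

def conjugator : Equiv.Perm I := conjugatorReal.subtypePerm conjugatorFun_mem_Icc_iff

theorem x0fun_eq_half_add {t : ℝ} (h : 1 / 2 < t) : x0fun t = t / 2 + 1 / 2 := by
  unfold x0fun; split_ifs <;> linarith

theorem x1fun_of_le {t : ℝ} (h : t ≤ 1 / 2) : x1fun t = t := if_pos h

theorem x1fun_eq_two_mul_sub {t : ℝ} (h₁ : 1 / 2 < t) (h₂ : t ≤ 5 / 8) :
    x1fun t = 2 * t - 1 / 2 := by
  unfold x1fun; split_ifs <;> linarith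

theorem x1fun_eq_add {t : ℝ} (h₁ : 5 / 8 < t) (h₂ : t ≤ 3 / 4) : x1fun t = t + 1 / 8 := by
  unfold x1fun; split_ifs <;> linarith

theorem x1fun_eq_half_add {t : ℝ} (h : 3 / 4 < t) : x1fun t = t / 2 + 1 / 2 := by
  unfold x1fun; split_ifs <;> linarith

theorem x0inv_x1fun_of_le {t : ℝ} (h : 3 / 4 ≤ t) : x0inv (x1fun t) = t := by
  unfold x0inv x1fun; split_ifs <;> linarith

theorem conjugatorFun_x0fun_x1fun {t : ℝ} (ht : t ≤ 1) :
    conjugatorFun (x0fun (x1fun t)) = x0fun (conjugatorFun t) := by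
  rcases le_or_gt t (1 / 2) with h₁ | h₁
  · have hx : x0fun t ≤ 3 / 4 := by unfold x0fun; split_ifs <;> linarith
    rw [x1fun_of_le h₁, conjugatorFun_of_le hx, conjugatorFun_of_le (by linarith)]
  rcases le_or_gt t (5 / 8) with h₂ | h₂
  · rw [x1fun_eq_two_mul_sub h₁ h₂, x0fun_eq_half_add (by linarith),
      conjugatorFun_eq_half_add (by linarith) (by linarith), conjugatorFun_of_le (by linarith),
      x0fun_eq_half_add h₁]
    ring
  rcases le_or_gt t (3 / 4) with h₃ | h₃
  · rw [x1fun_eq_add h₂ h₃, x0fun_eq_half_add (by linarith),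
      conjugatorFun_eq_sub (by linarith) (by linarith), conjugatorFun_of_le h₃,
      x0fun_eq_half_add h₁]
    ring
  · have hc := conjugatorFun_mem_Ioc ⟨h₃, ht⟩
    rw [x1fun_eq_half_add h₃, x0fun_eq_half_add (by linarith),
      show (t / 2 + 1 / 2) / 2 + 1 / 2 = (t + 3) / 4 by ring,
      conjugatorFun_add_three_div_four ⟨h₃, ht⟩, x0fun_eq_half_add (by linarith [hc.1])]
    ring

theorem x_zero : x 0 = x₀ := rfl

theorem x_one : x 1 = x₁ := by simp [x]

theorem x_two : x 2 = x₀ * x₁ * x₀⁻¹ := by simp [x]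

theorem conjugator_mul_x2_mul_x0 : conjugator * (x 2 * x 0) = x 0 * conjugator := by
  rw [x_two, x_zero, show x₀ * x₁ * x₀⁻¹ * x₀ = x₀ * x₁ by group]
  ext t
  exact conjugatorFun_x0fun_x1fun t.2.2

theorem disjoint_conjugator : conjugator.Disjoint (x₀⁻¹ * x₁) := by
  intro t
  rcases le_or_gt (t : ℝ) (3 / 4) with h | h
  · exact Or.inl (Subtype.ext (conjugatorFun_of_le h))
  · exact Or.inr (Subtype.ext (x0inv_x1fun_of_le h.le))

theorem conjugator_mul_x2_mul_x1 : conjugator * (x 2 * x 1) = x 1 * conjugator := by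
  have h := conjugator_mul_x2_mul_x0
  rw [x_two, x_zero] at h
  rw [x_two, x_one]
  calc conjugator * (x₀ * x₁ * x₀⁻¹ * x₁)
      = conjugator * (x₀ * x₁ * x₀⁻¹ * x₀) * (x₀⁻¹ * x₁) := by group
    _ = x₀ * (conjugator * (x₀⁻¹ * x₁)) := by rw [h]; group
    _ = x₁ * conjugator := by rw [disjoint_conjugator.commute.eq]; group

theorem Subgroup.exists_mulEquiv_closure_pair_of_mul_eq {M : Type*} [Group M] {a b a' b' : M}
    (c : M) (ha : c * a' = a * c) (hb : c * b' = b * c) :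
    ∃ ψ : Subgroup.closure ({a, b} : Set M) ≃* Subgroup.closure ({a', b'} : Set M),
      (ψ ⟨a, Subgroup.subset_closure (by simp)⟩ : M) = a' ∧
        (ψ ⟨b, Subgroup.subset_closure (by simp)⟩ : M) = b' := by
  have hconj {g g' : M} (h : c * g' = g * c) : MulAut.conj c⁻¹ g = g' := by
    rw [MulAut.conj_apply, inv_inv, mul_assoc, ← h, inv_mul_cancel_left]
  have hmap : (Subgroup.closure {a, b}).map (MulAut.conj c⁻¹).toMonoidHom =
      Subgroup.closure {a', b'} := by
    rw [MonoidHom.map_closure, Set.image_pair, MulEquiv.coe_toMonoidHom, hconj ha, hconj hb]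
  exact ⟨((MulAut.conj c⁻¹).subgroupMap _).trans (MulEquiv.subgroupCongr hmap), hconj ha,
    hconj hb⟩

/-- The map `x_0 ↦ x_0x_2`, `x_1 ↦ x_1x_2` extends to a group isomorphism from
Thompson's group `F` onto its subgroup `G = ⟨x_0x_2, x_1x_2⟩`; in particular `G ≅ F`.
(Products in the paper are written left-to-right, so the paper word `x_0x_2` is the Lean
element `x 2 * x 0`.) -/
theorem stmt0 : ∃ ψ : ↥F ≃* ↥G,
    (ψ ⟨x 0, x_mem_F 0⟩ : Equiv.Perm I) = x 2 * x 0 ∧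
    (ψ ⟨x 1, x_mem_F 1⟩ : Equiv.Perm I) = x 2 * x 1 :=
  Subgroup.exists_mulEquiv_closure_pair_of_mul_eq conjugator conjugator_mul_x2_mul_x0
    conjugator_mul_x2_mul_x1
end
end

section
/- Let B = x_{i_1}⋯x_{i_n} be a block such that the word x_{i_2}⋯x_{i_n} obtained by deleting its first letter is not a block (i.e. B is a minimal block). Then there exists j ∈ {2,…,n} such that i_j = i_1 + j - 1. -/
set_option maxHeartbeats 1000000

noncomputable section

lemma IsBlock.tail_ne_nil {a : ℕ} {t : List ℕ} (hB : IsBlock (a :: t)) : t ≠ [] := by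
  rintro rfl
  exact hB.2.2.1 rfl

lemma IsBlock.of_cons {a : ℕ} {t : List ℕ} (hB : IsBlock (a :: t))
    (hslack : ∀ k < t.length, t.getD k 0 ≠ a + k + 1) : IsBlock t := by
  obtain ⟨b, s, rfl⟩ := List.exists_cons_of_ne_nil hB.tail_ne_nil
  obtain ⟨-, hsorted, hlast, hlt⟩ := hB
  have hletter (k : ℕ) (hk : k < s.length + 1) : (b :: s).getD k 0 < a + k + 1 := by
    have hle := hlt (k + 1) (by simpa using hk)
    have hne := hslack k hk
    simp only [List.getD_cons_succ, List.headI] at hle hne ⊢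
    omega
  have hba : b = a := by
    have hb_lt := hletter 0 (by simp)
    have hab : a ≤ b := List.rel_of_pairwise_cons hsorted List.mem_cons_self
    simp only [List.getD_cons_zero] at hb_lt
    omega
  subst hba
  refine ⟨List.cons_ne_nil b s, hsorted.of_cons, ?_, fun k hk => hletter k hk⟩
  simpa [List.getLastD_cons] using hlast

/-- Let `B = x_{i_1}⋯x_{i_n}` be a block (encoded by the list `l`) such that the
word `x_{i_2}⋯x_{i_n}` obtained by deleting its first letter is not a block (`B` is a minimal
block).  Then there exists `j ∈ {2, …, n}` with `i_j = i_1 + j - 1` (with 0-based indexing: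
some `k` with `1 ≤ k < n` and `l[k] = l[0] + k`). -/
theorem stmt7 (l : List ℕ) (hB : IsBlock l) (hmin : ¬ IsBlock l.tail) :
    ∃ k, 1 ≤ k ∧ k < l.length ∧ l.getD k 0 = l.headI + k := by
  by_contra! hnone
  obtain ⟨a, t, rfl⟩ := List.exists_cons_of_ne_nil hB.1
  refine hmin (hB.of_cons fun k hk heq => hnone (k + 1) (by omega) (by simpa using hk) ?_)
  simp only [List.getD_cons_succ, List.headI, heq]
  omega
end
end
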